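/- With W = 1 + Σ_{k≥1} w_k S^{−k} as above, res(W S³ W^{−1}) = (1−S)(w₃ + Sw₃ + S²w₃ − (Sw₁)·w₂ − (S²w₁)·(Sw₂) − w₁·(S²w₂) + w₁·(Sw₁)·(S²w₁)). -/

import Mathlib

/-!
Write `V = Σ v_j S^{-j}`, so that the hypothesis says `W V = 1`, and put `u_j = S^j v_j`.
Shifting the `l`-th coefficient of `W V = 1` by `S^l` gives `Σ_{i ≤ l} (S^l w_i) u_{l-i} = 0`,
and subtracting this from `res (W S^l V) = Σ_{i ≤ l} w_i u_{l-i}` yields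
`res (W S^l V) = Σ_{i ≤ l} ((1 - S^l) w_i) u_{l-i}`. For `l = 3` the `i = 0` term vanishes,
`u_1`, `u_2` are read off the cases `l = 1, 2`, and `1 - S^3 = (1 - S)(1 + S + S^2)`.
-/

open Finset

/-- The shift operator `S^j`: `(Sh γ j f)(x) = f(x + jγ)`. -/
def Sh (γ : ℝ) (j : ℤ) (f : ℝ → ℂ) : ℝ → ℂ := fun x => f (x + j * γ)

section Shift

variable (γ : ℝ)

theorem Sh_Sh (a b : ℤ) (f : ℝ → ℂ) : Sh γ a (Sh γ b f) = Sh γ (b + a) f := by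
  funext x
  simp only [Sh, Int.cast_add]
  ring_nf

@[simp]
theorem Sh_one (j : ℤ) : Sh γ j 1 = 1 := rfl

@[simp]
theorem Sh_add (j : ℤ) (f g : ℝ → ℂ) : Sh γ j (f + g) = Sh γ j f + Sh γ j g := rfl

@[simp]
theorem Sh_sub (j : ℤ) (f g : ℝ → ℂ) : Sh γ j (f - g) = Sh γ j f - Sh γ j g := rfl

@[simp]
theorem Sh_mul (j : ℤ) (f g : ℝ → ℂ) : Sh γ j (f * g) = Sh γ j f * Sh γ j g := rfl

@[simp]
theorem Sh_zero (j : ℤ) : Sh γ j 0 = 0 := rfl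

theorem Sh_sum {ι : Type*} (s : Finset ι) (j : ℤ) (f : ι → ℝ → ℂ) :
    Sh γ j (∑ i ∈ s, f i) = ∑ i ∈ s, Sh γ j (f i) := by
  funext x
  simp [Sh, Finset.sum_apply]

end Shift

section Inverse

variable {γ : ℝ} {w v : ℕ → ℝ → ℂ}

theorem sum_shift_mul_shift_eq_zero {l : ℕ}
    (h : ∑ i ∈ range (l + 1), w i * Sh γ (-(i : ℤ)) (v (l - i)) = 0) :
    ∑ i ∈ range (l + 1), Sh γ l (w i) * Sh γ ((l : ℤ) - i) (v (l - i)) = 0 := by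
  have h' := congrArg (Sh γ l) h
  simpa only [Sh_sum, Sh_mul, Sh_Sh, neg_add_eq_sub, Sh_zero] using h'

theorem sum_mul_shift_eq_sum_sub_shift_mul {l : ℕ}
    (h : ∑ i ∈ range (l + 1), w i * Sh γ (-(i : ℤ)) (v (l - i)) = 0) :
    ∑ i ∈ range (l + 1), w i * Sh γ ((l : ℤ) - i) (v (l - i))
      = ∑ i ∈ range (l + 1), (w i - Sh γ l (w i)) * Sh γ ((l : ℤ) - i) (v (l - i)) := by
  simp only [sub_mul, sum_sub_distrib, sum_shift_mul_shift_eq_zero h, sub_zero]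

end Inverse

theorem stmt10 (γ : ℝ) (w v : ℕ → ℝ → ℂ)
    (hw0 : w 0 = 1) (hv0 : v 0 = 1)
    (hinv : ∀ l : ℕ, 1 ≤ l →
      ∑ i ∈ Finset.range (l + 1), w i * Sh γ (-(i : ℤ)) (v (l - i)) = 0) :
    ∑ i ∈ Finset.range 4, w i * Sh γ ((3 : ℤ) - (i : ℤ)) (v (3 - i))
      = (w 3 + Sh γ 1 (w 3) + Sh γ 2 (w 3)
          - Sh γ 1 (w 1) * w 2 - Sh γ 2 (w 1) * Sh γ 1 (w 2) - w 1 * Sh γ 2 (w 2)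
          + w 1 * Sh γ 1 (w 1) * Sh γ 2 (w 1))
        - Sh γ 1 (w 3 + Sh γ 1 (w 3) + Sh γ 2 (w 3)
          - Sh γ 1 (w 1) * w 2 - Sh γ 2 (w 1) * Sh γ 1 (w 2) - w 1 * Sh γ 2 (w 2)
          + w 1 * Sh γ 1 (w 1) * Sh γ 2 (w 1)) := by
  have h1 := sum_shift_mul_shift_eq_zero (hinv 1 le_rfl)
  have h2 := sum_shift_mul_shift_eq_zero (hinv 2 (by norm_num))
  have hres := sum_mul_shift_eq_sum_sub_shift_mul (hinv 3 (by norm_num))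
  simp only [Nat.cast_ofNat, Nat.reduceAdd] at hres
  rw [hres]
  norm_num [sum_range_succ, hw0, hv0, Sh_Sh] at h1 h2 ⊢
  linear_combination (w 1 - Sh γ 3 (w 1)) * h2
    + (w 2 - Sh γ 3 (w 2) - (w 1 - Sh γ 3 (w 1)) * Sh γ 2 (w 1)) * h1
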